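/- Let (K,|·|) be a normed field, f ∈ K[z] a polynomial of degree n ≥ 2, and 1 ≤ p ≤ ∞ with conjugate exponent q. Suppose x ∈ Kⁿ has pairwise distinct components and E(x) = ‖W(x)/d(x)‖_p < 1/2^{1/q}. Then the vector Tx = x − W(x) has pairwise distinct components, E(Tx) ≤ φ(E(x)), and |W_i(Tx)| ≤ β(E(x)) · |W_i(x)| for every index i, where φ(t) = ((n−1)^{1/q} t² / ((1−t)(1−2^{1/q} t))) · (1 + t/((n−1)^{1/p}(1−2^{1/q} t)))^{n−1} and β(t) = ((n−1)^{1/q} t / (1−t)) · (1 + t/((n−1)^{1/p}(1−2^{1/q} t)))^{n−1}. -/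

import Mathlib

open Finset Filter Topology
open scoped ENNReal

noncomputable def pnorm {n : ℕ} (p : ℝ≥0∞) (v : Fin n → ℝ) : ℝ :=
  if p = ⊤ then ⨆ i, |v i| else (∑ i, |v i| ^ p.toReal) ^ (1 / p.toReal)

noncomputable def epow (a : ℝ) (p : ℝ≥0∞) : ℝ :=
  if p = ⊤ then 1 else a ^ (1 / p.toReal)

noncomputable def dsep {K : Type*} [NormedField K] {n : ℕ} (x : Fin n → K) (i : Fin n) : ℝ :=
  sInf {r : ℝ | ∃ j, j ≠ i ∧ r = ‖x i - x j‖}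

noncomputable def Wcorr {K : Type*} [NormedField K] {n : ℕ} (f : Polynomial K)
    (x : Fin n → K) (i : Fin n) : K :=
  Polynomial.eval (x i) f / (f.leadingCoeff * ∏ j ∈ Finset.univ.erase i, (x i - x j))

def IsRootVector {K : Type*} [NormedField K] {n : ℕ} (f : Polynomial K) (ξ : Fin n → K) : Prop :=
  ∀ z : K, Polynomial.eval z f = f.leadingCoeff * ∏ i, (z - ξ i)

/-!
Let `u i = |W_i(x)| / d_i(x)` and `t = ‖u‖_p`. Hölder gives `∑_{i ∈ S} u i ≤ |S|^{1/q} t`; for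
`|S| = 1, 2, n - 1` this bounds `u i`, `u i + u j` and `∑_{k ≠ i} u k`. The bound on `u i + u j`
yields `|Tx_i - Tx_j| ≥ (1 - 2^{1/q} t) |x_i - x_j|`, hence distinct components and
`d(Tx) ≥ (1 - 2^{1/q} t) d(x)`.

By Lagrange interpolation, `f(z) = a₀ (∏_j (z - x_j) + ∑_k W_k ∏_{j ≠ k} (z - x_j))`. At
`z = Tx_i`, where `z - x_i = -W_i`, the first term cancels the summand `k = i`, leaving
`f(Tx_i) = -a₀ W_i ∑_{k ≠ i} W_k ∏_{j ≠ i, k} (Tx_i - x_j)`. Comparing each `Tx_i - x_j` with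
`Tx_i - Tx_j` and applying AM-GM to the resulting product `∏_{j ≠ i} (1 + u j / (1 - 2^{1/q} t))`
gives `|W_i(Tx)| ≤ β(t) |W_i(x)|`, and then `E(Tx) ≤ β(t) t / (1 - 2^{1/q} t) = φ(t)`.
-/

section Exponents

variable {p q : ℝ≥0∞}

lemma one_le_of_one_div_add_one_div_eq_one (hpq : 1 / p + 1 / q = 1) : 1 ≤ p := by
  have h : 1 / p ≤ 1 := le_self_add.trans_eq hpq
  rwa [one_div, ENNReal.inv_le_one] at h

lemma inv_toReal_add_inv_toReal (hpq : 1 / p + 1 / q = 1) :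
    p.toReal⁻¹ + q.toReal⁻¹ = 1 := by
  have hp : 1 / p ≠ ⊤ := ne_top_of_le_ne_top ENNReal.one_ne_top (le_self_add.trans_eq hpq)
  have hq : 1 / q ≠ ⊤ := ne_top_of_le_ne_top ENNReal.one_ne_top (le_add_self.trans_eq hpq)
  have h := congrArg ENNReal.toReal hpq
  rwa [ENNReal.toReal_add hp hq, one_div, one_div, ENNReal.toReal_inv, ENNReal.toReal_inv,
    ENNReal.toReal_one] at h

-- `(⊤ : ℝ≥0∞).toReal⁻¹ = 0`, so the branch `p = ⊤` of `epow` is the same power.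
lemma epow_eq_rpow (a : ℝ) (p : ℝ≥0∞) : epow a p = a ^ p.toReal⁻¹ := by
  unfold epow
  split_ifs with h <;> simp [h]

lemma one_le_epow {a : ℝ} (ha : 1 ≤ a) (p : ℝ≥0∞) : 1 ≤ epow a p := by
  rw [epow_eq_rpow]
  exact Real.one_le_rpow ha (by positivity)

lemma epow_nonneg {a : ℝ} (ha : 0 ≤ a) (p : ℝ≥0∞) : 0 ≤ epow a p := by
  rw [epow_eq_rpow]
  positivity

lemma one_epow (p : ℝ≥0∞) : epow 1 p = 1 := by
  rw [epow_eq_rpow, Real.one_rpow]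

lemma epow_mul_epow {a : ℝ} (ha : 0 ≤ a) (hpq : 1 / p + 1 / q = 1) :
    epow a p * epow a q = a := by
  have h := inv_toReal_add_inv_toReal hpq
  rw [epow_eq_rpow, epow_eq_rpow, ← Real.rpow_add' ha (h ▸ one_ne_zero), h, Real.rpow_one]

end Exponents

section PNorm

variable {n : ℕ} {p q : ℝ≥0∞}

lemma pnorm_nonneg (p : ℝ≥0∞) (v : Fin n → ℝ) : 0 ≤ pnorm p v := by
  unfold pnorm
  split_ifs
  · exact Real.iSup_nonneg fun i => abs_nonneg _
  · positivity

lemma pnorm_le_mul_pnorm (hp : p ≠ 0) {v w : Fin n → ℝ} {c : ℝ} (hc : 0 ≤ c)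
    (h : ∀ i, |v i| ≤ c * |w i|) : pnorm p v ≤ c * pnorm p w := by
  unfold pnorm
  split_ifs with hpt
  · refine Real.iSup_le (fun i => (h i).trans ?_)
      (mul_nonneg hc (Real.iSup_nonneg fun i => abs_nonneg _))
    exact mul_le_mul_of_nonneg_left
      (le_ciSup (f := fun i => |w i|) (Set.finite_range _).bddAbove i) hc
  · have hr : 0 < p.toReal := ENNReal.toReal_pos hp hpt
    calc (∑ i, |v i| ^ p.toReal) ^ (1 / p.toReal)
        ≤ (∑ i, c ^ p.toReal * |w i| ^ p.toReal) ^ (1 / p.toReal) := by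
          gcongr with i
          rw [← Real.mul_rpow hc (abs_nonneg _)]
          gcongr
          exact h i
      _ = c * (∑ i, |w i| ^ p.toReal) ^ (1 / p.toReal) := by
          rw [← Finset.mul_sum, Real.mul_rpow (by positivity) (by positivity), one_div,
            Real.rpow_rpow_inv hc hr.ne']

lemma sum_abs_le_epow_card_mul_pnorm (hpq : 1 / p + 1 / q = 1) (v : Fin n → ℝ)
    (s : Finset (Fin n)) : ∑ i ∈ s, |v i| ≤ epow #s q * pnorm p v := by
  unfold pnorm
  split_ifs with hpt
  · have hq : q = 1 := by simpa [hpt] using hpq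
    rw [hq, epow_eq_rpow, ENNReal.toReal_one, inv_one, Real.rpow_one, ← nsmul_eq_mul]
    exact Finset.sum_le_card_nsmul _ _ _ fun i _ =>
      le_ciSup (f := fun i => |v i|) (Set.finite_range _).bddAbove i
  · have hr : 1 ≤ p.toReal := by
      simpa using ENNReal.toReal_mono hpt (one_le_of_one_div_add_one_div_eq_one hpq)
    have hq : q.toReal⁻¹ = (p.toReal - 1) * (1 / p.toReal) := by
      have := inv_toReal_add_inv_toReal hpq
      rw [sub_mul, one_div, mul_inv_cancel₀ (by positivity), one_mul]
      linarith
    calc ∑ i ∈ s, |v i| = ((∑ i ∈ s, |v i|) ^ p.toReal) ^ (1 / p.toReal) := by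
          rw [one_div, Real.rpow_rpow_inv (by positivity) (by positivity)]
      _ ≤ ((#s : ℝ) ^ (p.toReal - 1) * ∑ i, |v i| ^ p.toReal) ^ (1 / p.toReal) := by
          gcongr
          refine (Real.rpow_sum_le_const_mul_sum_rpow_of_nonneg s hr
            fun i _ => abs_nonneg _).trans ?_
          gcongr
          exact s.subset_univ
      _ = epow #s q * (∑ i, |v i| ^ p.toReal) ^ (1 / p.toReal) := by
          rw [Real.mul_rpow (by positivity) (by positivity), ← Real.rpow_mul (by positivity),
            epow_eq_rpow, hq]

end PNorm

lemma prod_le_sum_div_card_pow {ι : Type*} (s : Finset ι) {z : ι → ℝ}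
    (hz : ∀ i ∈ s, 0 ≤ z i) : ∏ i ∈ s, z i ≤ ((∑ i ∈ s, z i) / #s) ^ #s := by
  rcases s.eq_empty_or_nonempty with rfl | hs
  · simp
  have h := Real.geom_mean_le_arith_mean s (fun _ => 1) z (fun _ _ => zero_le_one)
    (by simpa using hs) hz
  simp only [Real.rpow_one, Finset.sum_const, nsmul_eq_mul, mul_one, one_mul] at h
  calc ∏ i ∈ s, z i = ((∏ i ∈ s, z i) ^ ((#s : ℝ)⁻¹)) ^ #s :=
        (Real.rpow_inv_natCast_pow (Finset.prod_nonneg hz) hs.card_pos.ne').symm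
    _ ≤ _ := pow_le_pow_left₀ (Real.rpow_nonneg (Finset.prod_nonneg hz) _) h _

lemma prod_one_add_le_pow {ι : Type*} (s : Finset ι) {a : ι → ℝ} (ha : ∀ i ∈ s, 0 ≤ a i)
    {A : ℝ} (hA : ∑ i ∈ s, a i ≤ A) : ∏ i ∈ s, (1 + a i) ≤ (1 + A / #s) ^ #s := by
  refine (prod_le_sum_div_card_pow s fun i hi => by linarith [ha i hi]).trans ?_
  rcases s.eq_empty_or_nonempty with rfl | hs
  · simp
  rw [Finset.sum_add_distrib, Finset.sum_const, nsmul_eq_mul, mul_one, add_div,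
    div_self (Nat.cast_ne_zero.2 hs.card_pos.ne')]
  have : 0 ≤ ∑ i ∈ s, a i := Finset.sum_nonneg ha
  exact pow_le_pow_left₀ (by positivity) (by gcongr) _

lemma prod_one_add_div_le_pow {ι : Type*} (s : Finset ι) {u : ι → ℝ} (hu : ∀ i ∈ s, 0 ≤ u i)
    {A B c t : ℝ} (hA : A ≠ 0) (hc : 0 < c) (hsum : ∑ i ∈ s, u i ≤ A * t)
    (hAB : A * B = #s) : ∏ i ∈ s, (1 + u i / c) ≤ (1 + t / (B * c)) ^ #s := by
  have h := prod_one_add_le_pow s (a := fun i => u i / c) (fun i hi => div_nonneg (hu i hi) hc.le)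
    (A := A * t / c) (by rw [← sum_div]; gcongr)
  rwa [← hAB, div_div, mul_comm c, mul_assoc, mul_div_mul_left _ _ hA] at h

lemma norm_sum_mul_prod_erase_le {ι R : Type*} [DecidableEq ι] [NormedCommRing R]
    [NormOneClass R] (s : Finset ι) (a b : ι → R) (c : ι → ℝ)
    (h : ∀ k ∈ s, ‖a k‖ ≤ c k * ‖b k‖) :
    ‖∑ k ∈ s, a k * ∏ j ∈ s.erase k, b j‖ ≤ (∑ k ∈ s, c k) * ∏ j ∈ s, ‖b j‖ := by
  refine (norm_sum_le _ _).trans ?_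
  rw [sum_mul]
  refine sum_le_sum fun k hk => ?_
  calc ‖a k * ∏ j ∈ s.erase k, b j‖ ≤ ‖a k‖ * ∏ j ∈ s.erase k, ‖b j‖ :=
        (norm_mul_le _ _).trans (by gcongr; exact Finset.norm_prod_le _ _)
    _ ≤ c k * ‖b k‖ * ∏ j ∈ s.erase k, ‖b j‖ := by gcongr; exact h k hk
    _ = c k * ∏ j ∈ s, ‖b j‖ := by rw [mul_assoc, mul_prod_erase s (fun j => ‖b j‖) hk]

section Separation

variable {K : Type*} [NormedField K] {n : ℕ} {x : Fin n → K} {i j : Fin n}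

lemma dsep_le_norm_sub (hj : j ≠ i) : dsep x i ≤ ‖x i - x j‖ :=
  csInf_le ⟨0, by rintro r ⟨k, -, rfl⟩; exact norm_nonneg _⟩ ⟨j, hj, rfl⟩

lemma dsep_nonneg (x : Fin n → K) (i : Fin n) : 0 ≤ dsep x i :=
  Real.sInf_nonneg (by rintro r ⟨k, -, rfl⟩; exact norm_nonneg _)

lemma le_dsep [Nontrivial (Fin n)] {c : ℝ} (h : ∀ j, j ≠ i → c ≤ ‖x i - x j‖) :
    c ≤ dsep x i := by
  obtain ⟨j, hj⟩ := exists_ne i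
  exact le_csInf ⟨_, j, hj, rfl⟩ (by rintro r ⟨k, hk, rfl⟩; exact h k hk)

lemma dsep_pos [Nontrivial (Fin n)] (hx : Function.Injective x) (i : Fin n) :
    0 < dsep x i := by
  obtain ⟨j, hj⟩ := exists_ne i
  have hfin : {r : ℝ | ∃ j, j ≠ i ∧ r = ‖x i - x j‖}.Finite :=
    (Set.finite_range fun j => ‖x i - x j‖).subset (by rintro r ⟨k, -, rfl⟩; exact ⟨k, rfl⟩)
  obtain ⟨k, hk, hdk⟩ : dsep x i ∈ _ := Set.Nonempty.csInf_mem ⟨_, j, hj, rfl⟩ hfin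
  rw [hdk, norm_pos_iff, sub_ne_zero]
  exact fun h => hk (hx h.symm)

lemma norm_le_div_dsep_mul_norm_sub (hx : Function.Injective x) (hj : j ≠ i) (w : K) :
    ‖w‖ ≤ ‖w‖ / dsep x i * ‖x i - x j‖ := by
  have : Nontrivial (Fin n) := nontrivial_of_ne j i hj
  rw [div_mul_eq_mul_div, le_div_iff₀ (dsep_pos hx i)]
  exact mul_le_mul_of_nonneg_left (dsep_le_norm_sub hj) (norm_nonneg w)

lemma mul_norm_sub_le_norm_sub_sub (hx : Function.Injective x) (w : Fin n → K) (hj : j ≠ i) :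
    (1 - (‖w i‖ / dsep x i + ‖w j‖ / dsep x j)) * ‖x i - x j‖ ≤
      ‖(x i - w i) - (x j - w j)‖ := by
  have hwi := norm_le_div_dsep_mul_norm_sub hx hj (w i)
  have hwj := norm_le_div_dsep_mul_norm_sub hx hj.symm (w j)
  rw [norm_sub_rev (x j)] at hwj
  calc _ ≤ ‖x i - x j‖ - (‖w i‖ + ‖w j‖) := by linarith
    _ ≤ ‖x i - x j‖ - ‖w i - w j‖ := by gcongr; exact norm_sub_le _ _
    _ ≤ _ := by
      rw [show x i - w i - (x j - w j) = (x i - x j) - (w i - w j) by ring]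
      exact norm_sub_norm_le _ _

lemma mul_dsep_le_norm_sub_sub (hx : Function.Injective x) (w : K) (hj : j ≠ i)
    (hw : ‖w‖ / dsep x i ≤ 1) :
    (1 - ‖w‖ / dsep x i) * dsep x j ≤ ‖(x i - w) - x j‖ := by
  have hdj : dsep x j ≤ ‖x i - x j‖ := norm_sub_rev (x j) _ ▸ dsep_le_norm_sub hj.symm
  calc _ ≤ (1 - ‖w‖ / dsep x i) * ‖x i - x j‖ := by gcongr
    _ ≤ ‖x i - x j‖ - ‖w‖ := by linarith [norm_le_div_dsep_mul_norm_sub hx hj w]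
    _ ≤ _ := by rw [sub_right_comm]; exact norm_sub_norm_le _ _

lemma norm_sub_sub_le (hx : Function.Injective x) (w : Fin n → K) (hj : j ≠ i) {c : ℝ}
    (hc : 0 < c) (hsep : c * ‖x i - x j‖ ≤ ‖(x i - w i) - (x j - w j)‖) :
    ‖(x i - w i) - x j‖ ≤ (1 + ‖w j‖ / dsep x j / c) * ‖(x i - w i) - (x j - w j)‖ := by
  have hwj := norm_le_div_dsep_mul_norm_sub hx hj.symm (w j)
  rw [norm_sub_rev (x j)] at hwj
  have hu : 0 ≤ ‖w j‖ / dsep x j := div_nonneg (norm_nonneg _) (dsep_nonneg x j)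
  calc ‖(x i - w i) - x j‖ ≤ ‖(x i - w i) - (x j - w j)‖ + ‖w j‖ := by
        rw [show x i - w i - x j = (x i - w i - (x j - w j)) - w j by ring]
        exact norm_sub_le _ _
    _ ≤ ‖(x i - w i) - (x j - w j)‖ + ‖w j‖ / dsep x j * (‖(x i - w i) - (x j - w j)‖ / c) := by
        gcongr
        exact hwj.trans (by gcongr; rwa [le_div_iff₀' hc])
    _ = _ := by ring

lemma injective_of_mul_norm_sub_le (hx : Function.Injective x) {y : Fin n → K} {c : ℝ}
    (hc : 0 < c) (hsep : ∀ i j, j ≠ i → c * ‖x i - x j‖ ≤ ‖y i - y j‖) :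
    Function.Injective y := by
  intro i j hy
  by_contra hij
  have h := hsep i j (Ne.symm hij)
  rw [hy, sub_self, norm_zero] at h
  exact hij (hx (sub_eq_zero.1 (norm_le_zero_iff.1 (nonpos_of_mul_nonpos_right h hc))))

lemma mul_dsep_le_dsep [Nontrivial (Fin n)] {y : Fin n → K} {c : ℝ} (hc : 0 ≤ c)
    (hsep : ∀ j, j ≠ i → c * ‖x i - x j‖ ≤ ‖y i - y j‖) : c * dsep x i ≤ dsep y i :=
  le_dsep fun j hj => (mul_le_mul_of_nonneg_left (dsep_le_norm_sub hj) hc).trans (hsep j hj)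

lemma sum_div_dsep_le_epow_card_mul_pnorm {p q : ℝ≥0∞} (hpq : 1 / p + 1 / q = 1)
    (w x : Fin n → K) (s : Finset (Fin n)) :
    ∑ i ∈ s, ‖w i‖ / dsep x i ≤ epow #s q * pnorm p (fun i => ‖w i‖ / dsep x i) := by
  simpa only [abs_div, abs_norm, abs_of_nonneg (dsep_nonneg x _)] using
    sum_abs_le_epow_card_mul_pnorm hpq (fun i => ‖w i‖ / dsep x i) s

lemma mul_norm_sub_le_norm_sub_sub_of_pnorm {p q : ℝ≥0∞} (hpq : 1 / p + 1 / q = 1)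
    (hx : Function.Injective x) (w : Fin n → K) {t : ℝ}
    (ht : pnorm p (fun k => ‖w k‖ / dsep x k) = t) (hj : j ≠ i) :
    (1 - epow 2 q * t) * ‖x i - x j‖ ≤ ‖(x i - w i) - (x j - w j)‖ := by
  refine (mul_norm_sub_le_norm_sub_sub hx w hj).trans' ?_
  have h := ht ▸ sum_div_dsep_le_epow_card_mul_pnorm hpq w x {i, j}
  rw [sum_pair hj.symm, card_pair hj.symm, Nat.cast_ofNat] at h
  gcongr

lemma pnorm_div_dsep_le [Nontrivial (Fin n)] {p : ℝ≥0∞} (hp : p ≠ 0)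
    (hx : Function.Injective x) {y v w : Fin n → K} {b c : ℝ} (hb : 0 ≤ b) (hc : 0 < c)
    (hv : ∀ i, ‖v i‖ ≤ b * ‖w i‖) (hd : ∀ i, c * dsep x i ≤ dsep y i) :
    pnorm p (fun i => ‖v i‖ / dsep y i) ≤ b / c * pnorm p (fun i => ‖w i‖ / dsep x i) := by
  refine pnorm_le_mul_pnorm hp (by positivity) fun i => ?_
  rw [abs_of_nonneg (div_nonneg (norm_nonneg _) (dsep_nonneg y i)),
    abs_of_nonneg (div_nonneg (norm_nonneg _) (dsep_nonneg x i)), div_mul_div_comm]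
  exact div_le_div₀ (by positivity) (hv i) (mul_pos hc (dsep_pos hx i)) (hd i)

end Separation

section Weierstrass

open Polynomial

variable {K : Type*} [NormedField K] {n : ℕ} {f : K[X]} {x : Fin n → K}

lemma eval_eq_leadingCoeff_mul_prod_add_sum_Wcorr (hdeg : f.natDegree = n)
    (hx : Function.Injective x) (z : K) :
    f.eval z = f.leadingCoeff *
      (∏ j, (z - x j) + ∑ i, Wcorr f x i * ∏ j ∈ univ.erase i, (z - x j)) := by
  rcases eq_or_ne f 0 with rfl | hf
  · simp
  have ha : f.leadingCoeff ≠ 0 := leadingCoeff_ne_zero.2 hf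
  set g := f - C f.leadingCoeff * Lagrange.nodal univ x
  have hg : g.degree < #(univ : Finset (Fin n)) := by
    have hdeg' : (C f.leadingCoeff * Lagrange.nodal univ x).degree = f.degree := by
      rw [degree_C_mul ha, Lagrange.degree_nodal, degree_eq_natDegree hf, hdeg, card_univ,
        Fintype.card_fin]
    have h := degree_sub_lt_left hdeg'.symm hf (by
      rw [leadingCoeff_mul, leadingCoeff_C, Lagrange.nodal_monic.leadingCoeff, mul_one])
    rw [card_univ, Fintype.card_fin]
    rwa [degree_eq_natDegree hf, hdeg] at h
  have hgx : ∀ i, g.eval (x i) = f.eval (x i) := fun i => by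
    simp [g, Lagrange.eval_nodal_at_node (mem_univ i)]
  have hinterp := congrArg (eval z) (Lagrange.eq_interpolate hx.injOn hg)
  simp only [g, eval_sub, eval_mul, eval_C, Lagrange.eval_nodal, hgx, Lagrange.interpolate_apply,
    eval_finsetSum, Lagrange.basis, Lagrange.basisDivisor, eval_prod] at hinterp
  rw [sub_eq_iff_eq_add.mp hinterp, mul_add, mul_sum, add_comm]
  congr 1
  refine sum_congr rfl fun i _ => ?_
  rw [prod_mul_distrib, prod_inv_distrib, Wcorr, eval_X]
  field_simp

lemma eval_sub_Wcorr (hdeg : f.natDegree = n) (hx : Function.Injective x) (i : Fin n) :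
    f.eval (x i - Wcorr f x i) = -(f.leadingCoeff * Wcorr f x i *
      ∑ k ∈ univ.erase i,
        Wcorr f x k * ∏ j ∈ (univ.erase i).erase k, (x i - Wcorr f x i - x j)) := by
  set W := Wcorr f x
  have hzi : x i - W i - x i = -W i := by ring
  have hprod : ∏ j, (x i - W i - x j) = -W i * ∏ j ∈ univ.erase i, (x i - W i - x j) := by
    rw [← mul_prod_erase univ _ (mem_univ i), hzi]
  have hsum : ∑ k ∈ univ.erase i, W k * ∏ j ∈ univ.erase k, (x i - W i - x j) =
      -W i * ∑ k ∈ univ.erase i, W k * ∏ j ∈ (univ.erase i).erase k, (x i - W i - x j) := by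
    rw [mul_sum]
    refine sum_congr rfl fun k hk => ?_
    rw [← mul_prod_erase _ _ (mem_erase.2 ⟨(ne_of_mem_erase hk).symm, mem_univ i⟩), hzi,
      erase_right_comm]
    ring
  rw [eval_eq_leadingCoeff_mul_prod_add_sum_Wcorr hdeg hx, hprod,
    ← add_sum_erase univ _ (mem_univ i), hsum]
  ring

end Weierstrass

section Contraction

open Polynomial

variable {K : Type*} [NormedField K] {n : ℕ} {f : K[X]} {x : Fin n → K}

lemma norm_eval_sub_Wcorr_le (hdeg : f.natDegree = n) (hx : Function.Injective x) {i : Fin n}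
    {t : ℝ} (ht : ‖Wcorr f x i‖ / dsep x i ≤ t) (ht1 : t < 1) :
    ‖f.eval (x i - Wcorr f x i)‖ ≤ ‖f.leadingCoeff‖ * ‖Wcorr f x i‖ *
      ((∑ k ∈ univ.erase i, ‖Wcorr f x k‖ / dsep x k) / (1 - t) *
        ∏ j ∈ univ.erase i, ‖x i - Wcorr f x i - x j‖) := by
  rw [eval_sub_Wcorr hdeg hx, norm_neg, norm_mul, norm_mul, sum_div]
  gcongr
  refine norm_sum_mul_prod_erase_le _ _ _ _ fun k hk => ?_
  have hki := ne_of_mem_erase hk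
  have : Nontrivial (Fin n) := nontrivial_of_ne k i hki
  have hsep := mul_dsep_le_norm_sub_sub hx (Wcorr f x i) hki (ht.trans ht1.le)
  rw [div_div, div_mul_eq_mul_div, le_div_iff₀ (mul_pos (dsep_pos hx k) (by linarith))]
  calc ‖Wcorr f x k‖ * (dsep x k * (1 - t))
      ≤ ‖Wcorr f x k‖ * ((1 - ‖Wcorr f x i‖ / dsep x i) * dsep x k) := by
        rw [mul_comm (dsep x k)]
        gcongr
        exact dsep_nonneg x k
    _ ≤ ‖Wcorr f x k‖ * ‖x i - Wcorr f x i - x k‖ := by gcongr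

lemma norm_Wcorr_sub_Wcorr_le (hdeg : f.natDegree = n) (hx : Function.Injective x)
    {i : Fin n} {t c : ℝ} (ht : ‖Wcorr f x i‖ / dsep x i ≤ t) (ht1 : t < 1) (hc : 0 < c)
    (hsep : ∀ j, j ≠ i →
      c * ‖x i - x j‖ ≤ ‖(x i - Wcorr f x i) - (x j - Wcorr f x j)‖) :
    ‖Wcorr f (fun j => x j - Wcorr f x j) i‖ ≤ ‖Wcorr f x i‖ *
      ((∑ k ∈ univ.erase i, ‖Wcorr f x k‖ / dsep x k) / (1 - t) *
        ∏ j ∈ univ.erase i, (1 + ‖Wcorr f x j‖ / dsep x j / c)) := by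
  have hf : f ≠ 0 := fun h => by
    rw [h, natDegree_zero] at hdeg
    exact (hdeg ▸ i.pos).false
  have ha : 0 < ‖f.leadingCoeff‖ := norm_pos_iff.2 (leadingCoeff_ne_zero.2 hf)
  have hD : 0 < ∏ j ∈ univ.erase i, ‖(x i - Wcorr f x i) - (x j - Wcorr f x j)‖ :=
    prod_pos fun j hj => (hsep j (ne_of_mem_erase hj)).trans_lt' <| mul_pos hc <|
      norm_pos_iff.2 <| sub_ne_zero.2 fun h => ne_of_mem_erase hj (hx h).symm
  have hprod : ∏ j ∈ univ.erase i, ‖x i - Wcorr f x i - x j‖ ≤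
      (∏ j ∈ univ.erase i, (1 + ‖Wcorr f x j‖ / dsep x j / c)) *
        ∏ j ∈ univ.erase i, ‖(x i - Wcorr f x i) - (x j - Wcorr f x j)‖ := by
    rw [← prod_mul_distrib]
    exact prod_le_prod (fun _ _ => norm_nonneg _) fun j hj =>
      norm_sub_sub_le hx (Wcorr f x) (ne_of_mem_erase hj) hc (hsep j (ne_of_mem_erase hj))
  have hsum : 0 ≤ (∑ k ∈ univ.erase i, ‖Wcorr f x k‖ / dsep x k) / (1 - t) :=
    div_nonneg (sum_nonneg fun k _ => div_nonneg (norm_nonneg _) (dsep_nonneg x k))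
      (by linarith)
  calc ‖Wcorr f (fun j => x j - Wcorr f x j) i‖
      = ‖f.eval (x i - Wcorr f x i)‖ / (‖f.leadingCoeff‖ *
          ∏ j ∈ univ.erase i, ‖(x i - Wcorr f x i) - (x j - Wcorr f x j)‖) := by
        rw [Wcorr, norm_div, norm_mul, norm_prod]
    _ ≤ ‖f.leadingCoeff‖ * ‖Wcorr f x i‖ *
          ((∑ k ∈ univ.erase i, ‖Wcorr f x k‖ / dsep x k) / (1 - t) *
            ((∏ j ∈ univ.erase i, (1 + ‖Wcorr f x j‖ / dsep x j / c)) *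
              ∏ j ∈ univ.erase i, ‖(x i - Wcorr f x i) - (x j - Wcorr f x j)‖)) /
          (‖f.leadingCoeff‖ *
            ∏ j ∈ univ.erase i, ‖(x i - Wcorr f x i) - (x j - Wcorr f x j)‖) := by
        gcongr
        exact (norm_eval_sub_Wcorr_le hdeg hx ht ht1).trans (by gcongr)
    _ = _ := by field_simp

lemma norm_Wcorr_sub_Wcorr_le_mul (hdeg : f.natDegree = n) (hx : Function.Injective x)
    {i : Fin n} {t c A B : ℝ} (ht : ‖Wcorr f x i‖ / dsep x i ≤ t) (ht1 : t < 1) (hc : 0 < c)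
    (hsep : ∀ j, j ≠ i →
      c * ‖x i - x j‖ ≤ ‖(x i - Wcorr f x i) - (x j - Wcorr f x j)‖)
    (hsum : ∑ k ∈ univ.erase i, ‖Wcorr f x k‖ / dsep x k ≤ A * t) (hA : A ≠ 0)
    (hAB : A * B = n - 1) :
    ‖Wcorr f (fun j => x j - Wcorr f x j) i‖ ≤
      A * t / (1 - t) * (1 + t / (B * c)) ^ (n - 1) * ‖Wcorr f x i‖ := by
  have hcard : #(univ.erase i) = n - 1 := by
    rw [card_erase_of_mem (mem_univ i), card_univ, Fintype.card_fin]
  have hu : ∀ k ∈ univ.erase i, 0 ≤ ‖Wcorr f x k‖ / dsep x k :=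
    fun k _ => div_nonneg (norm_nonneg _) (dsep_nonneg x k)
  have hS : (∑ k ∈ univ.erase i, ‖Wcorr f x k‖ / dsep x k) / (1 - t) ≤ A * t / (1 - t) := by
    gcongr
  have hP := prod_one_add_div_le_pow _ hu hA hc hsum <| by
    rw [hAB, hcard, Nat.cast_sub (i.pos : 0 < n), Nat.cast_one]
  have hP0 : 0 ≤ ∏ j ∈ univ.erase i, (1 + ‖Wcorr f x j‖ / dsep x j / c) :=
    prod_nonneg fun j hj => by have := hu j hj; positivity
  have hS0 := (div_nonneg (sum_nonneg hu) (by linarith)).trans hS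
  calc _ ≤ _ := norm_Wcorr_sub_Wcorr_le hdeg hx ht ht1 hc hsep
    _ ≤ ‖Wcorr f x i‖ * (A * t / (1 - t) * (1 + t / (B * c)) ^ #(univ.erase i)) := by
        gcongr
    _ = _ := by rw [hcard, mul_comm]

lemma norm_Wcorr_sub_Wcorr_le_of_pnorm (hn : 2 ≤ n) (hdeg : f.natDegree = n)
    {p q : ℝ≥0∞} (hpq : 1 / p + 1 / q = 1) (hx : Function.Injective x) (i : Fin n) {t : ℝ}
    (ht : pnorm p (fun k => ‖Wcorr f x k‖ / dsep x k) = t) (hγt : epow 2 q * t < 1) :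
    ‖Wcorr f (fun j => x j - Wcorr f x j) i‖ ≤
      epow ((n : ℝ) - 1) q * t / (1 - t) *
        (1 + t / (epow ((n : ℝ) - 1) p * (1 - epow 2 q * t))) ^ (n - 1) * ‖Wcorr f x i‖ := by
  have hu := ht ▸ sum_div_dsep_le_epow_card_mul_pnorm hpq (Wcorr f x) x
  have hui : ‖Wcorr f x i‖ / dsep x i ≤ t := by simpa [one_epow] using hu {i}
  have ht1 : t < 1 := by
    nlinarith [one_le_epow one_le_two q, (div_nonneg (norm_nonneg _) (dsep_nonneg x i)).trans hui]
  have hn1 : (1 : ℝ) ≤ n - 1 := by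
    rw [le_sub_iff_add_le]
    exact_mod_cast hn
  refine norm_Wcorr_sub_Wcorr_le_mul hdeg hx hui ht1 (by linarith)
    (fun j hj => mul_norm_sub_le_norm_sub_sub_of_pnorm hpq hx (Wcorr f x) ht hj) ?_
    (by linarith [one_le_epow hn1 q]) (by rw [mul_comm]; exact epow_mul_epow (by linarith) hpq)
  have h := hu (univ.erase i)
  rwa [card_erase_of_mem (mem_univ i), card_univ, Fintype.card_fin,
    Nat.cast_sub (by omega : 1 ≤ n), Nat.cast_one] at h

end Contraction

/-- semilocal contraction lemma. If `x` has pairwise distinct components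
and `E(x) = ‖W(x)/d(x)‖_p < 1/2^{1/q}`, then `Tx = x − W(x)` has pairwise distinct
components, `E(Tx) ≤ φ(E(x))` and `|W_i(Tx)| ≤ β(E(x))|W_i(x)|`. -/
theorem weierstrass_semilocal_contraction
    {K : Type*} [NormedField K] {n : ℕ} (hn : 2 ≤ n)
    (f : Polynomial K) (hdeg : f.natDegree = n)
    (p q : ℝ≥0∞) (hp : 1 ≤ p) (hpq : 1 / p + 1 / q = 1)
    (E : (Fin n → K) → ℝ)
    (hE : ∀ y : Fin n → K, E y = pnorm p (fun i => ‖Wcorr f y i‖ / dsep y i))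
    (φ β : ℝ → ℝ)
    (hφ : ∀ t : ℝ, φ t = epow ((n : ℝ) - 1) q * t ^ 2 / ((1 - t) * (1 - epow 2 q * t)) *
      (1 + t / (epow ((n : ℝ) - 1) p * (1 - epow 2 q * t))) ^ (n - 1))
    (hβ : ∀ t : ℝ, β t = epow ((n : ℝ) - 1) q * t / (1 - t) *
      (1 + t / (epow ((n : ℝ) - 1) p * (1 - epow 2 q * t))) ^ (n - 1))
    (x : Fin n → K) (hx : Function.Injective x) (hEx : E x < 1 / epow 2 q) :
    Function.Injective (fun i => x i - Wcorr f x i) ∧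
    E (fun i => x i - Wcorr f x i) ≤ φ (E x) ∧
    ∀ i : Fin n,
      ‖Wcorr f (fun j => x j - Wcorr f x j) i‖ ≤ β (E x) * ‖Wcorr f x i‖ := by
  have : Nontrivial (Fin n) := Fin.nontrivial_iff_two_le.2 hn
  have hγt : epow 2 q * E x < 1 := by
    rwa [lt_div_iff₀' (by linarith [one_le_epow one_le_two q])] at hEx
  have hWT i : ‖Wcorr f (fun j => x j - Wcorr f x j) i‖ ≤ β (E x) * ‖Wcorr f x i‖ := by
    rw [hβ]
    exact norm_Wcorr_sub_Wcorr_le_of_pnorm hn hdeg hpq hx i (hE x).symm hγt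
  have hsep i j (hj : j ≠ i) :=
    mul_norm_sub_le_norm_sub_sub_of_pnorm hpq hx (Wcorr f x) (hE x).symm hj
  have hc : 0 < 1 - epow 2 q * E x := by linarith
  have hβ0 : 0 ≤ β (E x) := by
    have ht0 : 0 ≤ E x := hE x ▸ pnorm_nonneg p _
    have ht1 : 0 < 1 - E x := by nlinarith [one_le_epow one_le_two q]
    have hn1 : (0 : ℝ) ≤ n - 1 := by
      rw [sub_nonneg]
      exact_mod_cast (by omega : 1 ≤ n)
    have := epow_nonneg hn1 q
    have := epow_nonneg hn1 p
    rw [hβ]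
    positivity
  refine ⟨injective_of_mul_norm_sub_le hx hc hsep, ?_, hWT⟩
  rw [hE, hφ]
  refine (pnorm_div_dsep_le (zero_lt_one.trans_le hp).ne' hx hβ0 hc hWT
    fun i => mul_dsep_le_dsep hc.le (hsep i)).trans_eq ?_
  rw [← hE x, hβ]
  field_simp
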